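/- arXiv:2206.01975 — 2 statements merged into one kernel-verified Lean document; each statement's English description precedes it below -/
import Mathlib

section
/- Let d ≥ 1, ε > 0, let b ∈ ℝ^d be a constant vector, let u : ℝ^d → ℝ be twice continuously differentiable with compact support, set f := −εΔu + ⟨b, ∇u⟩ and v(x) := exp(−⟨b,x⟩) u(x). Then ε ∫_{ℝ^d} |∇v(x)|² dx + (1−ε)‖b‖² ∫_{ℝ^d} v(x)² dx = ∫_{ℝ^d} exp(−⟨b,x⟩) f(x) v(x) dx. -/
/-
With `φ = exp (-⟪b, ·⟫)` and `v = φ u` one has `∂_w v = φ (∂_w u - ⟪b, w⟫ u)`. Expanding the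
squares, in every direction `w` the energy density `ε (∂_w v)² + (1 - ε) ⟪b, w⟫² v²` differs from
`φ (-ε ∂_w² u + ⟪b, w⟫ ∂_w u) v` exactly by `∂_w` of the flux `φ² u (ε ∂_w u - ⟪b, w⟫ u / 2)`.
Summing over the coordinate directions, the two integrands of the identity differ by the
divergence of a compactly supported `C¹` vector field, whose integral vanishes.
-/

open MeasureTheory RealInnerProductSpace

/-- Laplacian of `u : ℝ^d → ℝ`, `Δu = Σᵢ ∂²u/∂xᵢ²`. -/
noncomputable def lap {d : ℕ} (u : EuclideanSpace ℝ (Fin d) → ℝ)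
    (x : EuclideanSpace ℝ (Fin d)) : ℝ :=
  ∑ i, fderiv ℝ (fun y => fderiv ℝ u y (EuclideanSpace.single i 1)) x
    (EuclideanSpace.single i 1)

section Integral
variable {E : Type*} [NormedAddCommGroup E] [NormedSpace ℝ E] [MeasurableSpace E] [BorelSpace E]
  {μ : Measure E} {g : E → ℝ}

theorem HasCompactSupport.integrable_fderiv_apply [IsFiniteMeasureOnCompacts μ]
    (hgc : HasCompactSupport g) (hg : ContDiff ℝ 1 g) (w : E) :
    Integrable (fun x => fderiv ℝ g x w) μ :=
  ((hg.continuous_fderiv one_ne_zero).clm_apply continuous_const).integrable_of_hasCompactSupport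
    (hgc.fderiv_apply ℝ w)

theorem HasCompactSupport.integral_fderiv_apply_eq_zero [FiniteDimensional ℝ E]
    [μ.IsAddHaarMeasure] (hgc : HasCompactSupport g) (hg : ContDiff ℝ 1 g) (w : E) :
    ∫ x, fderiv ℝ g x w ∂μ = 0 := by
  simpa using integral_mul_fderiv_eq_neg_fderiv_mul_of_integrable (μ := μ) (f := fun _ => 1)
    (v := w) (by simp) (by simpa using hgc.integrable_fderiv_apply hg w)
    (by simpa using hg.continuous.integrable_of_hasCompactSupport hgc)
    (fun _ _ => differentiableAt_const _) (fun x _ => hg.differentiable one_ne_zero x)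

end Integral

section Gradient
variable {F : Type*} [NormedAddCommGroup F] [InnerProductSpace ℝ F] [CompleteSpace F] {g : F → ℝ}

theorem ContDiff.continuous_gradient (hg : ContDiff ℝ 1 g) : Continuous (gradient g) :=
  (InnerProductSpace.toDual ℝ F).symm.continuous.comp (hg.continuous_fderiv one_ne_zero)

theorem HasCompactSupport.gradient (hg : HasCompactSupport g) : HasCompactSupport (gradient g) :=
  (hg.fderiv ℝ).comp_left (g := (InnerProductSpace.toDual ℝ F).symm) (map_zero _)

end Gradient

section Weight
variable {E : Type*} [NormedAddCommGroup E] [InnerProductSpace ℝ E] {u : E → ℝ}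

theorem hasFDerivAt_exp_neg_inner (b x : E) :
    HasFDerivAt (fun y => Real.exp (-⟪b, y⟫)) (Real.exp (-⟪b, x⟫) • -innerSL ℝ b) x :=
  (innerSL ℝ b).hasFDerivAt.neg.exp

theorem fderiv_exp_neg_inner_mul_apply {b x : E} (hu : DifferentiableAt ℝ u x) (w : E) :
    fderiv ℝ (fun y => Real.exp (-⟪b, y⟫) * u y) x w
      = Real.exp (-⟪b, x⟫) * (fderiv ℝ u x w - ⟪b, w⟫ * u x) := by
  rw [((hasFDerivAt_exp_neg_inner b x).fun_mul hu.hasFDerivAt).fderiv]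
  simp only [add_apply, smul_apply, neg_apply, innerSL_apply_apply, smul_eq_mul]
  ring

noncomputable def energyFlux (ε : ℝ) (b : E) (u : E → ℝ) (w x : E) : ℝ :=
  Real.exp (-⟪b, x⟫) ^ 2 * u x * (ε * fderiv ℝ u x w - ⟪b, w⟫ / 2 * u x)

theorem fderiv_energyFlux_apply {ε : ℝ} {b x : E} (hu : ContDiff ℝ 2 u) (w : E) :
    fderiv ℝ (energyFlux ε b u w) x w
      = Real.exp (-⟪b, x⟫) ^ 2 * (ε * fderiv ℝ u x w ^ 2
          + ε * u x * fderiv ℝ (fun y => fderiv ℝ u y w) x w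
          - (2 * ε + 1) * ⟪b, w⟫ * u x * fderiv ℝ u x w + ⟪b, w⟫ ^ 2 * u x ^ 2) := by
  have hdu : HasFDerivAt u (fderiv ℝ u x) x := (hu.differentiable (by norm_num) x).hasFDerivAt
  have hdu2 : HasFDerivAt (fun y => fderiv ℝ u y w) (fderiv ℝ (fun y => fderiv ℝ u y w) x) x :=
    (((hu.fderiv_right (m := 1) (by norm_num)).clm_apply contDiff_const).differentiable
      one_ne_zero x).hasFDerivAt
  unfold energyFlux
  rw [((((hasFDerivAt_exp_neg_inner b x).pow 2).fun_mul hdu).fun_mul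
    ((hdu2.const_mul ε).fun_sub (hdu.const_mul (⟪b, w⟫ / 2)))).fderiv]
  simp only [Nat.add_one_sub_one, pow_one, nsmul_eq_mul, Nat.cast_ofNat, smul_neg, smul_add,
    add_apply, smul_apply, sub_apply, smul_eq_mul, neg_apply, innerSL_apply_apply]
  ring

theorem contDiff_energyFlux {ε : ℝ} {b : E} (hu : ContDiff ℝ 2 u) (w : E) :
    ContDiff ℝ 1 (energyFlux ε b u w) := by
  have hφ : ContDiff ℝ 1 (fun y => Real.exp (-⟪b, y⟫)) := (innerSL ℝ b).contDiff.neg.exp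
  have hu1 : ContDiff ℝ 1 u := hu.of_le (by norm_num)
  have hdu : ContDiff ℝ 1 (fun y => fderiv ℝ u y w) :=
    (hu.fderiv_right (m := 1) (by norm_num)).clm_apply contDiff_const
  unfold energyFlux
  fun_prop

theorem HasCompactSupport.energyFlux {ε : ℝ} {b : E} (hu : HasCompactSupport u) (w : E) :
    HasCompactSupport (energyFlux ε b u w) :=
  hu.mono <| Function.support_subset_iff'.2 fun x hx => by
    simp [_root_.energyFlux, Function.notMem_support.1 hx]

theorem directional_energy_density_eq_add_fderiv_energyFlux {ε : ℝ} {b : E}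
    (hu : ContDiff ℝ 2 u) (w x : E) :
    ε * fderiv ℝ (fun y => Real.exp (-⟪b, y⟫) * u y) x w ^ 2
        + (1 - ε) * ⟪b, w⟫ ^ 2 * (Real.exp (-⟪b, x⟫) * u x) ^ 2
      = Real.exp (-⟪b, x⟫) * (-ε * fderiv ℝ (fun y => fderiv ℝ u y w) x w
          + ⟪b, w⟫ * fderiv ℝ u x w) * (Real.exp (-⟪b, x⟫) * u x)
        + fderiv ℝ (energyFlux ε b u w) x w := by
  rw [fderiv_exp_neg_inner_mul_apply (hu.differentiable (by norm_num) x),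
    fderiv_energyFlux_apply hu]
  ring

end Weight

section Euclidean
variable {d : ℕ}

theorem EuclideanSpace.gradient_apply (g : EuclideanSpace ℝ (Fin d) → ℝ)
    (x : EuclideanSpace ℝ (Fin d)) (i : Fin d) :
    gradient g x i = fderiv ℝ g x (EuclideanSpace.single i 1) := by
  rw [← inner_gradient_left, EuclideanSpace.inner_single_right]
  simp

theorem energy_density_eq_add_sum_fderiv_energyFlux {ε : ℝ} {b : EuclideanSpace ℝ (Fin d)}
    {u : EuclideanSpace ℝ (Fin d) → ℝ} (hu : ContDiff ℝ 2 u) (x : EuclideanSpace ℝ (Fin d)) :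
    ε * ‖gradient (fun y => Real.exp (-⟪b, y⟫) * u y) x‖ ^ 2
        + (1 - ε) * ‖b‖ ^ 2 * (Real.exp (-⟪b, x⟫) * u x) ^ 2
      = Real.exp (-⟪b, x⟫) * (-ε * lap u x + ⟪b, gradient u x⟫) * (Real.exp (-⟪b, x⟫) * u x)
        + ∑ i, fderiv ℝ (energyFlux ε b u (EuclideanSpace.single i 1)) x
            (EuclideanSpace.single i 1) := by
  have hb i : ⟪b, EuclideanSpace.single i 1⟫ = b i := by
    simp [EuclideanSpace.inner_single_right]
  simp only [EuclideanSpace.real_norm_sq_eq, EuclideanSpace.gradient_apply, lap,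
    PiLp.inner_apply, Finset.mul_sum, Finset.sum_mul, ← Finset.sum_add_distrib]
  refine Finset.sum_congr rfl fun i _ => ?_
  have hdir := directional_energy_density_eq_add_fderiv_energyFlux (ε := ε) (b := b) hu
    (EuclideanSpace.single i 1) x
  rw [hb] at hdir
  simp only [RCLike.inner_apply, conj_trivial]
  linear_combination hdir

end Euclidean

theorem exp_change_of_variable_energy_identity_general
    (d : ℕ) (ε : ℝ)
    (b : EuclideanSpace ℝ (Fin d))
    (u : EuclideanSpace ℝ (Fin d) → ℝ)
    (hu : ContDiff ℝ 2 u) (huc : HasCompactSupport u)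
    (f : EuclideanSpace ℝ (Fin d) → ℝ)
    (hf : ∀ x, f x = -ε * lap u x + ⟪b, gradient u x⟫)
    (v : EuclideanSpace ℝ (Fin d) → ℝ)
    (hv : ∀ x, v x = Real.exp (-⟪b, x⟫) * u x) :
    ε * (∫ x : EuclideanSpace ℝ (Fin d), ‖gradient v x‖ ^ 2)
        + (1 - ε) * ‖b‖ ^ 2 * ∫ x : EuclideanSpace ℝ (Fin d), (v x) ^ 2
      = ∫ x : EuclideanSpace ℝ (Fin d), Real.exp (-⟪b, x⟫) * f x * v x := by
  have hvu : v = fun x => Real.exp (-⟪b, x⟫) * u x := funext hv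
  have hv1 : ContDiff ℝ 1 v := hvu ▸ (innerSL ℝ b).contDiff.neg.exp.mul (hu.of_le (by norm_num))
  have hvc : HasCompactSupport v := hvu ▸ huc.mul_left
  have hgrad : Integrable fun x => ‖gradient v x‖ ^ 2 :=
    Continuous.integrable_of_hasCompactSupport (hv1.continuous_gradient.norm.pow 2)
      (hvc.gradient.norm.comp_left (g := fun t : ℝ => t ^ 2) (zero_pow two_ne_zero))
  have hsq : Integrable fun x => v x ^ 2 :=
    Continuous.integrable_of_hasCompactSupport (hv1.continuous.pow 2)
      (hvc.comp_left (g := fun t : ℝ => t ^ 2) (zero_pow two_ne_zero))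
  have hflux (i : Fin d) : Integrable fun x =>
      fderiv ℝ (energyFlux ε b u (EuclideanSpace.single i 1)) x (EuclideanSpace.single i 1) :=
    (huc.energyFlux _).integrable_fderiv_apply (contDiff_energyFlux hu _) _
  have hdiv (i : Fin d) :
      ∫ x, fderiv ℝ (energyFlux ε b u (EuclideanSpace.single i 1)) x (EuclideanSpace.single i 1)
        = 0 :=
    (huc.energyFlux _).integral_fderiv_apply_eq_zero (contDiff_energyFlux hu _) _
  calc _ = ∫ x, ε * ‖gradient v x‖ ^ 2 + (1 - ε) * ‖b‖ ^ 2 * v x ^ 2 := by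
        rw [integral_add (hgrad.const_mul ε) (hsq.const_mul _), integral_const_mul,
          integral_const_mul]
    _ = ∫ x, ε * ‖gradient v x‖ ^ 2 + (1 - ε) * ‖b‖ ^ 2 * v x ^ 2
          - ∑ i, fderiv ℝ (energyFlux ε b u (EuclideanSpace.single i 1)) x
            (EuclideanSpace.single i 1) := by
        rw [integral_sub ((hgrad.const_mul ε).fun_add (hsq.const_mul _))
            (integrable_finsetSum _ fun i _ => hflux i),
          integral_finsetSum _ fun i _ => hflux i, Finset.sum_eq_zero fun i _ => hdiv i, sub_zero]
    _ = _ := by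
        simp only [hf, hvu, energy_density_eq_add_sum_fderiv_energyFlux hu, add_sub_cancel_right]

theorem exp_change_of_variable_energy_identity
    (d : ℕ) (hd : 1 ≤ d) (ε : ℝ) (hε : 0 < ε)
    (b : EuclideanSpace ℝ (Fin d))
    (u : EuclideanSpace ℝ (Fin d) → ℝ)
    (hu : ContDiff ℝ 2 u) (huc : HasCompactSupport u)
    (f : EuclideanSpace ℝ (Fin d) → ℝ)
    (hf : ∀ x, f x = -ε * lap u x + ⟪b, gradient u x⟫)
    (v : EuclideanSpace ℝ (Fin d) → ℝ)
    (hv : ∀ x, v x = Real.exp (-⟪b, x⟫) * u x) :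
    ε * (∫ x : EuclideanSpace ℝ (Fin d), ‖gradient v x‖ ^ 2)
        + (1 - ε) * ‖b‖ ^ 2 * ∫ x : EuclideanSpace ℝ (Fin d), (v x) ^ 2
      = ∫ x : EuclideanSpace ℝ (Fin d), Real.exp (-⟪b, x⟫) * f x * v x :=
  exp_change_of_variable_energy_identity_general d ε b u hu huc f hf v hv
end

section
/- Let V and H be real Hilbert spaces, ι : V → H a continuous linear map with dense range, and a : V × V → ℝ a bounded bilinear form which is coercive, i.e., there is α > 0 with a(v,v) ≥ α‖v‖_V² for all v ∈ V. Let T : H → V be a linear map satisfying a(Tf, v) = ⟨f, ιv⟩_H for all f ∈ H and v ∈ V. Let S ⊆ H be a finite-dimensional subspace, let P : H → H be the orthogonal projection onto S, and assume that for every s ∈ S there exists v ∈ V with P(ιv) = s. Then T(S) = { v ∈ V : a(v, w) = 0 for every w ∈ V with P(ιw) = 0 }. -/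
/-!
Let `P` be the orthogonal projection onto `S`. For `f ∈ S` and `P (ι w) = 0` we get
`a (T f) w = ⟪f, ι w⟫ = ⟪f, P (ι w)⟫ = 0`, which gives `T(S) ⊆ {…}`. For the converse, the
compression `P ∘ ι ∘ T : S → S` is injective: if `P (ι (T s)) = 0` then
`a (T s) (T s) = ⟪s, ι (T s)⟫ = 0`, so `T s = 0` by coercivity, and writing `s = P (ι v)` gives
`‖s‖² = ⟪s, ι v⟫ = a (T s) v = 0`. As `S` is finite-dimensional it is also surjective, so for `v`
in the right-hand side there is `s ∈ S` with `P (ι (T s - v)) = 0`; then `T s - v` is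
`a`-orthogonal to itself and coercivity gives `v = T s`.
-/

open scoped InnerProductSpace

namespace Submodule

variable {𝕜 E : Type*} [RCLike 𝕜] [NormedAddCommGroup E] [InnerProductSpace 𝕜 E]
  (K : Submodule 𝕜 E) [K.HasOrthogonalProjection]

noncomputable def compression (A : E →ₗ[𝕜] E) : K →ₗ[𝕜] K :=
  K.orthogonalProjectionOnto.toLinearMap ∘ₗ A ∘ₗ K.subtype

@[simp]
theorem compression_apply (A : E →ₗ[𝕜] E) (x : K) :
    K.compression A x = K.orthogonalProjectionOnto (A x) :=
  rfl

theorem inner_compression_self (A : E →ₗ[𝕜] E) (x : K) :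
    ⟪x, K.compression A x⟫_𝕜 = ⟪(x : E), A x⟫_𝕜 :=
  inner_orthogonalProjectionOnto_eq_of_mem_left x (A x)

theorem compression_injective {A : E →ₗ[𝕜] E} (hA : ∀ x ∈ K, ⟪x, A x⟫_𝕜 = 0 → x = 0) :
    Function.Injective (K.compression A) := by
  rw [← LinearMap.ker_eq_bot, LinearMap.ker_eq_bot']
  intro x hx
  exact Subtype.ext <| hA x x.2 <| by rw [← inner_compression_self, hx, inner_zero_right]

theorem compression_surjective [FiniteDimensional 𝕜 K] {A : E →ₗ[𝕜] E}
    (hA : ∀ x ∈ K, ⟪x, A x⟫_𝕜 = 0 → x = 0) : Function.Surjective (K.compression A) :=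
  LinearMap.injective_iff_surjective.mp (K.compression_injective hA)

end Submodule

theorem LinearMap.eq_zero_of_coercive {V : Type*} [NormedAddCommGroup V] [Module ℝ V]
    {a : V →ₗ[ℝ] V →ₗ[ℝ] ℝ} {α : ℝ} (hα : 0 < α) (hcoercive : ∀ v : V, α * ‖v‖ ^ 2 ≤ a v v)
    {u : V} (hu : a u u = 0) : u = 0 := by
  have hsq : α * ‖u‖ ^ 2 ≤ 0 := hu ▸ hcoercive u
  have : ‖u‖ ^ 2 = 0 := le_antisymm (nonpos_of_mul_nonpos_right hsq hα) (sq_nonneg _)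
  simpa using this

section SolutionOperator

variable {V H : Type*} [AddCommGroup V] [Module ℝ V] [NormedAddCommGroup H]
  [InnerProductSpace ℝ H] {a : V →ₗ[ℝ] V →ₗ[ℝ] ℝ} {ι : V →ₗ[ℝ] H} {T : H →ₗ[ℝ] V}
  (S : Submodule ℝ H) [S.HasOrthogonalProjection]

theorem apply_solution_eq_zero_of_orthogonalProjectionOnto_eq_zero
    (hT : ∀ (f : H) (v : V), a (T f) v = ⟪f, ι v⟫_ℝ) {f : H} (hf : f ∈ S) {w : V}
    (hw : S.orthogonalProjectionOnto (ι w) = 0) : a (T f) w = 0 := by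
  rw [hT, ← S.inner_orthogonalProjectionOnto_eq_of_mem_left ⟨f, hf⟩, hw, inner_zero_right]

theorem inner_comp_solution_definite (hdef : ∀ u : V, a u u = 0 → u = 0)
    (hT : ∀ (f : H) (v : V), a (T f) v = ⟪f, ι v⟫_ℝ)
    (hproj : ∀ s ∈ S, ∃ v : V, (S.orthogonalProjectionOnto (ι v) : H) = s) :
    ∀ s ∈ S, ⟪s, (ι ∘ₗ T) s⟫_ℝ = 0 → s = 0 := by
  intro s hs hself
  have hTs : T s = 0 := hdef _ (by rw [hT]; exact hself)
  obtain ⟨v, rfl⟩ := hproj s hs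
  rw [← inner_self_eq_zero (𝕜 := ℝ), ← Submodule.coe_inner, S.inner_orthogonalProjectionOnto_eq_of_mem_left,
    ← hT, hTs, map_zero, LinearMap.zero_apply]

theorem mem_image_solution_of_forall_apply_eq_zero (hdef : ∀ u : V, a u u = 0 → u = 0)
    (hT : ∀ (f : H) (v : V), a (T f) v = ⟪f, ι v⟫_ℝ)
    (hsurj : Function.Surjective (S.compression (ι ∘ₗ T))) {v : V}
    (hv : ∀ w : V, S.orthogonalProjectionOnto (ι w) = 0 → a v w = 0) : v ∈ T '' S := by
  obtain ⟨s, hs⟩ := hsurj (S.orthogonalProjectionOnto (ι v))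
  refine ⟨s, s.2, ?_⟩
  have hw : S.orthogonalProjectionOnto (ι (T s - v)) = 0 := by
    rw [map_sub, map_sub, ← hs, S.compression_apply, LinearMap.comp_apply, sub_self]
  have hself : a (T s - v) (T s - v) = 0 := by
    rw [map_sub a, LinearMap.sub_apply,
      apply_solution_eq_zero_of_orthogonalProjectionOnto_eq_zero S hT s.2 hw, hv _ hw, sub_zero]
  exact sub_eq_zero.mp (hdef _ hself)

theorem image_solution_eq_setOf_forall_apply_eq_zero [FiniteDimensional ℝ S]
    (hdef : ∀ u : V, a u u = 0 → u = 0) (hT : ∀ (f : H) (v : V), a (T f) v = ⟪f, ι v⟫_ℝ)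
    (hproj : ∀ s ∈ S, ∃ v : V, (S.orthogonalProjectionOnto (ι v) : H) = s) :
    T '' S = {v : V | ∀ w : V, (S.orthogonalProjectionOnto (ι w) : H) = 0 → a v w = 0} := by
  simp only [ZeroMemClass.coe_eq_zero]
  refine Set.Subset.antisymm ?_ fun v hv ↦ ?_
  · rintro _ ⟨f, hf, rfl⟩ w hw
    exact apply_solution_eq_zero_of_orthogonalProjectionOnto_eq_zero S hT hf hw
  · have hsurj := S.compression_surjective (inner_comp_solution_definite S hdef hT hproj)
    exact mem_image_solution_of_forall_apply_eq_zero S hdef hT hsurj hv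

end SolutionOperator

theorem ideal_space_characterization_general
    (V H : Type*)
    [NormedAddCommGroup V] [InnerProductSpace ℝ V]
    [NormedAddCommGroup H] [InnerProductSpace ℝ H]
    (ι : V →L[ℝ] H)
    (a : V →ₗ[ℝ] V →ₗ[ℝ] ℝ)
    (α : ℝ) (hα : 0 < α) (hcoercive : ∀ v : V, α * ‖v‖ ^ 2 ≤ a v v)
    (T : H →ₗ[ℝ] V)
    (hT : ∀ (f : H) (v : V), a (T f) v = inner ℝ f (ι v))
    (S : Submodule ℝ H) [FiniteDimensional ℝ S]
    (hproj : ∀ s ∈ S, ∃ v : V, (Submodule.orthogonalProjectionOnto S (ι v) : H) = s) :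
    T '' (S : Set H)
      = {v : V | ∀ w : V, (Submodule.orthogonalProjectionOnto S (ι w) : H) = 0 → a v w = 0} :=
  image_solution_eq_setOf_forall_apply_eq_zero (ι := ι.toLinearMap) S
    (fun _ ↦ LinearMap.eq_zero_of_coercive hα hcoercive) hT hproj

theorem ideal_space_characterization
    (V H : Type*)
    [NormedAddCommGroup V] [InnerProductSpace ℝ V] [CompleteSpace V]
    [NormedAddCommGroup H] [InnerProductSpace ℝ H] [CompleteSpace H]
    (ι : V →L[ℝ] H) (hι : DenseRange ι)
    (a : V →ₗ[ℝ] V →ₗ[ℝ] ℝ)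
    (Ca : ℝ) (hbdd : ∀ u v : V, |a u v| ≤ Ca * ‖u‖ * ‖v‖)
    (α : ℝ) (hα : 0 < α) (hcoercive : ∀ v : V, α * ‖v‖ ^ 2 ≤ a v v)
    (T : H →ₗ[ℝ] V)
    (hT : ∀ (f : H) (v : V), a (T f) v = inner ℝ f (ι v))
    (S : Submodule ℝ H) [FiniteDimensional ℝ S]
    (hproj : ∀ s ∈ S, ∃ v : V, (Submodule.orthogonalProjectionOnto S (ι v) : H) = s) :
    T '' (S : Set H)
      = {v : V | ∀ w : V, (Submodule.orthogonalProjectionOnto S (ι w) : H) = 0 → a v w = 0} :=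
  ideal_space_characterization_general V H ι a α hα hcoercive T hT S hproj
end
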